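/- arXiv:2108.12824 — 3 statements merged into one kernel-verified Lean document; each statement's English description precedes it below -/
import Mathlib

section
/- Let C assign to each finite semigroup S an S-complex C(S), such that C preserves direct images of surjective homomorphisms and S ∈ Fix(C) means C(S) = sing(S). Then Fix(C) is a pseudovariety: it is closed under finite products, subsemigroups, and homomorphic images. -/
open Pointwise

/-- An `S`-complex: a subsemigroup of `Po S` containing all singletons and closed
under taking nonempty subsets of its members. -/
def IsSCom {S : Type*} [Semigroup S] (K : Set (Set S)) : Prop :=
  (∀ X ∈ K, X.Nonempty) ∧
  (∀ X ∈ K, ∀ Y ∈ K, X * Y ∈ K) ∧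
  (∀ x : S, {x} ∈ K) ∧
  (∀ X ∈ K, ∀ X₀ : Set S, X₀.Nonempty → X₀ ⊆ X → X₀ ∈ K)


/-- A complex functor: a subfunctor of the nonempty power-set functor on finite
semigroups assigning to each finite semigroup `S` an `S`-complex, acting on
homomorphisms by direct image, and preserving regular epimorphisms
(surjections induce surjections). -/
structure CplxFunctor : Type 1 where
  obj : ∀ (S : Type) [Finite S] [Semigroup S], Set (Set S)
  isSCom : ∀ (S : Type) [Finite S] [Semigroup S], IsSCom (obj S)
  map_mem : ∀ (S T : Type) [Finite S] [Semigroup S] [Finite T] [Semigroup T]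
      (φ : S →ₙ* T), ∀ X ∈ obj S, φ '' X ∈ obj T
  map_surj : ∀ (S T : Type) [Finite S] [Semigroup S] [Finite T] [Semigroup T]
      (φ : S →ₙ* T), Function.Surjective φ → ∀ Y ∈ obj T, ∃ X ∈ obj S, φ '' X = Y

/-- The fixed points of a complex functor (semigroups `S` with `C(S) = sing(S)`)
form a pseudovariety: they are closed under finite products, subsemigroups, and
homomorphic images. -/
theorem stmt15 (C : CplxFunctor) :
    (∀ (S T : Type) [Finite S] [Semigroup S] [Finite T] [Semigroup T],
        C.obj S = {X : Set S | ∃ x : S, X = {x}} →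
        C.obj T = {X : Set T | ∃ x : T, X = {x}} →
        C.obj (S × T) = {X : Set (S × T) | ∃ x : S × T, X = {x}}) ∧
    (∀ (U V : Type) [Finite U] [Semigroup U] [Finite V] [Semigroup V]
        (f : U →ₙ* V), Function.Injective f →
        C.obj V = {X : Set V | ∃ x : V, X = {x}} →
        C.obj U = {X : Set U | ∃ x : U, X = {x}}) ∧
    (∀ (V W : Type) [Finite V] [Semigroup V] [Finite W] [Semigroup W]
        (f : V →ₙ* W), Function.Surjective f →
        C.obj V = {X : Set V | ∃ x : V, X = {x}} →
        C.obj W = {X : Set W | ∃ x : W, X = {x}}) := by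
  refine ⟨?_, ?_, ?_⟩
  · intro S T _ _ _ _ hS hT
    ext X
    constructor
    · intro hX
      have hne : X.Nonempty := (C.isSCom (S × T)).1 X hX
      have h1 : (MulHom.fst S T) '' X ∈ C.obj S := C.map_mem _ _ _ X hX
      have h2 : (MulHom.snd S T) '' X ∈ C.obj T := C.map_mem _ _ _ X hX
      rw [hS] at h1; rw [hT] at h2
      obtain ⟨s, hs⟩ := h1
      obtain ⟨t, ht⟩ := h2
      refine ⟨(s, t), ?_⟩
      apply Set.eq_singleton_iff_nonempty_unique_mem.2 ⟨hne, ?_⟩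
      intro p hp
      have hps : p.1 ∈ ({s} : Set S) := hs ▸ ⟨p, hp, rfl⟩
      have hpt : p.2 ∈ ({t} : Set T) := ht ▸ ⟨p, hp, rfl⟩
      exact Prod.ext hps hpt
    · rintro ⟨x, rfl⟩
      exact (C.isSCom (S × T)).2.2.1 x
  · intro U V _ _ _ _ f hf hV
    ext X
    constructor
    · intro hX
      have hne : X.Nonempty := (C.isSCom U).1 X hX
      have h1 : f '' X ∈ C.obj V := C.map_mem _ _ f X hX
      rw [hV] at h1
      obtain ⟨v, hv⟩ := h1
      obtain ⟨x, hx⟩ := hne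
      refine ⟨x, Set.eq_singleton_iff_nonempty_unique_mem.2 ⟨⟨x, hx⟩, ?_⟩⟩
      intro y hy
      apply hf
      have h1 : f y ∈ ({v} : Set V) := hv ▸ ⟨y, hy, rfl⟩
      have h2 : f x ∈ ({v} : Set V) := hv ▸ ⟨x, hx, rfl⟩
      rw [h1, h2]
    · rintro ⟨x, rfl⟩
      exact (C.isSCom U).2.2.1 x
  · intro V W _ _ _ _ f hf hV
    ext Y
    constructor
    · intro hY
      obtain ⟨X, hX, rfl⟩ := C.map_surj _ _ f hf Y hY
      rw [hV] at hX
      obtain ⟨x, rfl⟩ := hX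
      exact ⟨f x, Set.image_singleton⟩
    · rintro ⟨x, rfl⟩
      exact (C.isSCom W).2.2.1 x
end

section
/- For every pseudovariety V and every finite semigroup S, the V-pointlike functor satisfies: P_V(S) is the largest among the values C(S) over complex functors C with V ⊆ Fix(C). Equivalently, the maps Fix and V ↦ P_V form a Galois connection between the lattice of complex functors and the opposite of the lattice of pseudovarieties: for any complex functor C and pseudovariety V, C ≤ P_V if and only if V ⊆ Fix(C). -/
open Pointwise

/-- A relational morphism `ρ : S ⇸ T`: a subsemigroup of `S × T` whose
projection to `S` is surjective. -/
def IsRelMorph {S T : Type*} [Semigroup S] [Semigroup T] (ρ : Set (S × T)) : Prop :=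
  (∀ p ∈ ρ, ∀ q ∈ ρ, p * q ∈ ρ) ∧ (∀ s : S, ∃ t : T, (s, t) ∈ ρ)

/-- A pseudovariety of finite semigroups: a class of finite semigroups closed
under finite (binary) products, subsemigroups, and homomorphic images. -/
structure Psv : Type 1 where
  mem : ∀ (V : Type) [Finite V] [Semigroup V], Prop
  prod_mem : ∀ (V W : Type) [Finite V] [Semigroup V] [Finite W] [Semigroup W],
      mem V → mem W → mem (V × W)
  sub_mem : ∀ (U V : Type) [Finite U] [Semigroup U] [Finite V] [Semigroup V]
      (f : U →ₙ* V), Function.Injective f → mem V → mem U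
  quot_mem : ∀ (V W : Type) [Finite V] [Semigroup V] [Finite W] [Semigroup W]
      (f : V →ₙ* W), Function.Surjective f → mem V → mem W

/-- `X ⊆ S` is `𝕍`-pointlike: `X` is nonempty and for every relational morphism
`ρ : S ⇸ V` with `V ∈ 𝕍` there exists `v ∈ V` with `X ⊆ ρ⁻¹(v)`. -/
def Pointlike (𝕍 : Psv) {S : Type} [Finite S] [Semigroup S] (X : Set S) : Prop :=
  X.Nonempty ∧ ∀ (V : Type) [Finite V] [Semigroup V], 𝕍.mem V →
    ∀ ρ : Set (S × V), IsRelMorph ρ → ∃ v : V, ∀ s ∈ X, (s, v) ∈ ρ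


section Aux

variable (𝕍 : Psv)

lemma pl_singleton {S : Type} [Finite S] [Semigroup S] (x : S) : Pointlike 𝕍 {x} := by
  refine ⟨Set.singleton_nonempty x, ?_⟩
  intro V _ _ _ ρ hρ
  obtain ⟨v, hv⟩ := hρ.2 x
  exact ⟨v, fun s hs => by rw [Set.mem_singleton_iff] at hs; subst hs; exact hv⟩

lemma pl_mono {S : Type} [Finite S] [Semigroup S] {X X₀ : Set S} (h : Pointlike 𝕍 X)
    (h0 : X₀.Nonempty) (hsub : X₀ ⊆ X) : Pointlike 𝕍 X₀ := by
  refine ⟨h0, ?_⟩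
  intro V _ _ hV ρ hρ
  obtain ⟨v, hv⟩ := h.2 V hV ρ hρ
  exact ⟨v, fun s hs => hv s (hsub hs)⟩

lemma pl_mul {S : Type} [Finite S] [Semigroup S] {X Y : Set S} (hX : Pointlike 𝕍 X)
    (hY : Pointlike 𝕍 Y) : Pointlike 𝕍 (X * Y) := by
  refine ⟨hX.1.mul hY.1, ?_⟩
  intro V _ _ hV ρ hρ
  obtain ⟨v, hv⟩ := hX.2 V hV ρ hρ
  obtain ⟨w, hw⟩ := hY.2 V hV ρ hρ
  refine ⟨v * w, ?_⟩
  intro s hs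
  rw [Set.mem_mul] at hs
  obtain ⟨x, hx, y, hy, rfl⟩ := hs
  exact hρ.1 (x, v) (hv x hx) (y, w) (hw y hy)

lemma pl_image {S T : Type} [Finite S] [Semigroup S] [Finite T] [Semigroup T]
    (φ : S →ₙ* T) {X : Set S} (hX : Pointlike 𝕍 X) : Pointlike 𝕍 (φ '' X) := by
  refine ⟨hX.1.image φ, ?_⟩
  intro V _ _ hV ρ hρ
  have hσ : IsRelMorph {p : S × V | (φ p.1, p.2) ∈ ρ} := by
    constructor
    · intro p hp q hq
      show (φ (p.1 * q.1), p.2 * q.2) ∈ ρ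
      rw [map_mul]
      exact hρ.1 (φ p.1, p.2) hp (φ q.1, q.2) hq
    · intro s
      obtain ⟨t, ht⟩ := hρ.2 (φ s)
      exact ⟨t, ht⟩
  obtain ⟨v, hv⟩ := hX.2 V hV _ hσ
  refine ⟨v, ?_⟩
  rintro t ⟨s, hs, rfl⟩
  exact hv s hs

lemma pl_of_mem {S : Type} [Finite S] [Semigroup S] (hS : 𝕍.mem S) {X : Set S}
    (hX : Pointlike 𝕍 X) : ∃ x : S, X = {x} := by
  have hid : IsRelMorph {p : S × S | p.1 = p.2} := by
    constructor
    · rintro p hp q hq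
      show p.1 * q.1 = p.2 * q.2
      rw [hp, hq]
    · exact fun s => ⟨s, rfl⟩
  obtain ⟨v, hv⟩ := hX.2 S hS _ hid
  exact ⟨v, (hX.1.subset_singleton_iff).1 (fun s hs => hv s hs)⟩

lemma exists_refine {S : Type} [Finite S] [Semigroup S]
    (V₁ : Type) [Finite V₁] [Semigroup V₁] (h₁ : 𝕍.mem V₁)
    (ρ₁ : Set (S × V₁)) (hρ₁ : IsRelMorph ρ₁) (s : Finset (Set S)) :
    ∃ (V : Type) (_ : Finite V) (_ : Semigroup V), 𝕍.mem V ∧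
      ∃ ρ : Set (S × V), IsRelMorph ρ ∧
        ∀ X ∈ s, X.Nonempty → (∃ v : V, ∀ x ∈ X, (x, v) ∈ ρ) → Pointlike 𝕍 X := by
  classical
  induction s using Finset.induction_on with
  | empty => exact ⟨V₁, ‹_›, ‹_›, h₁, ρ₁, hρ₁, by simp⟩
  | @insert A s hA ih =>
    obtain ⟨V, fV, sV, hV, ρ, hρ, hps⟩ := ih
    by_cases hPA : A.Nonempty → Pointlike 𝕍 A
    · refine ⟨V, fV, sV, hV, ρ, hρ, ?_⟩
      intro X hX hne hcov
      rcases Finset.mem_insert.1 hX with rfl | hX'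
      · exact hPA hne
      · exact hps X hX' hne hcov
    · push_neg at hPA
      obtain ⟨hne, hnp⟩ := hPA
      have h2 : ¬ ∀ (W : Type) [Finite W] [Semigroup W], 𝕍.mem W →
          ∀ τ : Set (S × W), IsRelMorph τ → ∃ w : W, ∀ a ∈ A, (a, w) ∈ τ :=
        fun h => hnp ⟨hne, h⟩
      push_neg at h2
      obtain ⟨W, fW, sW, hW, τ, hτ, hbad⟩ := h2
      refine ⟨V × W, inferInstance, inferInstance, 𝕍.prod_mem V W hV hW,
        {p : S × (V × W) | (p.1, p.2.1) ∈ ρ ∧ (p.1, p.2.2) ∈ τ}, ?_, ?_⟩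
      · constructor
        · intro p hp q hq
          exact ⟨hρ.1 (p.1, p.2.1) hp.1 (q.1, q.2.1) hq.1,
                 hτ.1 (p.1, p.2.2) hp.2 (q.1, q.2.2) hq.2⟩
        · intro x
          obtain ⟨v, hv⟩ := hρ.2 x
          obtain ⟨w, hw⟩ := hτ.2 x
          exact ⟨(v, w), hv, hw⟩
      · intro X hX hne' hcov
        obtain ⟨⟨v, w⟩, hvw⟩ := hcov
        rcases Finset.mem_insert.1 hX with rfl | hX'
        · obtain ⟨a, ha, hna⟩ := hbad w
          exact absurd (hvw a ha).2 hna
        · exact hps X hX' hne' ⟨v, fun x hx => (hvw x hx).1⟩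

lemma exists_universal {S : Type} [Finite S] [Semigroup S]
    (V₁ : Type) [Finite V₁] [Semigroup V₁] (h₁ : 𝕍.mem V₁)
    (ρ₁ : Set (S × V₁)) (hρ₁ : IsRelMorph ρ₁) :
    ∃ (V : Type) (_ : Finite V) (_ : Semigroup V), 𝕍.mem V ∧
      ∃ ρ : Set (S × V), IsRelMorph ρ ∧
        ∀ X : Set S, X.Nonempty → (∃ v : V, ∀ x ∈ X, (x, v) ∈ ρ) → Pointlike 𝕍 X := by
  classical
  letI : Fintype (Set S) := Fintype.ofFinite (Set S)
  obtain ⟨V, fV, sV, hV, ρ, hρ, h⟩ := exists_refine 𝕍 V₁ h₁ ρ₁ hρ₁ Finset.univ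
  exact ⟨V, fV, sV, hV, ρ, hρ, fun X => h X (Finset.mem_univ X)⟩

lemma pl_surj {S T : Type} [Finite S] [Semigroup S] [Finite T] [Semigroup T]
    (φ : S →ₙ* T) (hφ : Function.Surjective φ) {Y : Set T} (hY : Pointlike 𝕍 Y) :
    ∃ X : Set S, Pointlike 𝕍 X ∧ φ '' X = Y := by
  by_cases hall : ∀ X : Set S, X.Nonempty → Pointlike 𝕍 X
  · refine ⟨φ ⁻¹' Y, hall _ ?_, Set.image_preimage_eq Y hφ⟩
    obtain ⟨t, ht⟩ := hY.1
    obtain ⟨s, rfl⟩ := hφ t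
    exact ⟨s, ht⟩
  · push_neg at hall
    obtain ⟨X₁, hne₁, hnp₁⟩ := hall
    have h2 : ¬ ∀ (W : Type) [Finite W] [Semigroup W], 𝕍.mem W →
        ∀ τ : Set (S × W), IsRelMorph τ → ∃ w : W, ∀ a ∈ X₁, (a, w) ∈ τ :=
      fun h => hnp₁ ⟨hne₁, h⟩
    push_neg at h2
    obtain ⟨V₁, fV₁, sV₁, h₁, ρ₁, hρ₁, -⟩ := h2
    obtain ⟨V, fV, sV, hV, ρ, hρm, huniv⟩ := exists_universal 𝕍 V₁ h₁ ρ₁ hρ₁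
    have hσ : IsRelMorph {q : T × V | ∃ s : S, φ s = q.1 ∧ (s, q.2) ∈ ρ} := by
      constructor
      · rintro p ⟨a, ha, hap⟩ q ⟨b, hb, hbq⟩
        refine ⟨a * b, ?_, hρm.1 (a, p.2) hap (b, q.2) hbq⟩
        rw [map_mul, ha, hb]
        rfl
      · intro t
        obtain ⟨s, rfl⟩ := hφ t
        obtain ⟨v, hv⟩ := hρm.2 s
        exact ⟨v, s, rfl, hv⟩
    obtain ⟨v, hv⟩ := hY.2 V hV _ hσ
    refine ⟨{x : S | φ x ∈ Y ∧ (x, v) ∈ ρ}, huniv _ ?_ ⟨v, fun x hx => hx.2⟩, ?_⟩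
    · obtain ⟨t, ht⟩ := hY.1
      obtain ⟨s, hst, hsv⟩ := hv t ht
      exact ⟨s, by rw [Set.mem_setOf_eq, hst]; exact ⟨ht, hsv⟩⟩
    · apply Set.Subset.antisymm
      · rintro t ⟨x, hx, rfl⟩
        exact hx.1
      · intro t ht
        obtain ⟨s, hst, hsv⟩ := hv t ht
        exact ⟨s, ⟨by rw [hst]; exact ht, hsv⟩, hst⟩

def Pfun : CplxFunctor where
  obj S _ _ := {X : Set S | Pointlike 𝕍 X}
  isSCom S _ _ := ⟨fun X hX => hX.1, fun X hX Y hY => pl_mul 𝕍 hX hY,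
    fun x => pl_singleton 𝕍 x, fun X hX X₀ hne hsub => pl_mono 𝕍 hX hne hsub⟩
  map_mem S T _ _ _ _ φ X hX := pl_image 𝕍 φ hX
  map_surj S T _ _ _ _ φ hφ Y hY := by
    obtain ⟨X, h1, h2⟩ := pl_surj 𝕍 φ hφ hY
    exact ⟨X, h1, h2⟩

def relSemigroup {S V : Type} [Semigroup S] [Semigroup V] (ρ : Set (S × V))
    (h : ∀ p ∈ ρ, ∀ q ∈ ρ, p * q ∈ ρ) : Semigroup ρ where
  mul p q := ⟨p.1 * q.1, h _ p.2 _ q.2⟩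
  mul_assoc p q r := Subtype.ext (mul_assoc _ _ _)

lemma C_le_pl (C : CplxFunctor)
    (hfix : ∀ (S : Type) [Finite S] [Semigroup S], 𝕍.mem S →
        C.obj S = {X : Set S | ∃ x : S, X = {x}}) :
    ∀ (S : Type) [Finite S] [Semigroup S], C.obj S ⊆ {X : Set S | Pointlike 𝕍 X} := by
  intro S _ _ X hX
  refine ⟨(C.isSCom S).1 X hX, ?_⟩
  intro V _ _ hV ρ hρ
  letI : Semigroup ρ := relSemigroup ρ hρ.1
  haveI : Finite ρ := Subtype.finite
  let π₁ : ρ →ₙ* S := ⟨fun p => p.1.1, fun p q => rfl⟩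
  let π₂ : ρ →ₙ* V := ⟨fun p => p.1.2, fun p q => rfl⟩
  have hπ₁ : Function.Surjective π₁ := by
    intro x
    obtain ⟨t, ht⟩ := hρ.2 x
    exact ⟨⟨(x, t), ht⟩, rfl⟩
  obtain ⟨Z, hZ, hZX⟩ := C.map_surj ρ S π₁ hπ₁ X hX
  have h2 : π₂ '' Z ∈ C.obj V := C.map_mem ρ V π₂ Z hZ
  rw [hfix V hV] at h2
  obtain ⟨v, hv⟩ := h2
  refine ⟨v, ?_⟩
  intro x hx
  rw [← hZX] at hx
  obtain ⟨z, hz, rfl⟩ := hx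
  have hzv : π₂ z = v := by
    have : π₂ z ∈ π₂ '' Z := ⟨z, hz, rfl⟩
    rw [hv] at this
    exact this
  have hz2 : (z.1.1, z.1.2) ∈ ρ := by simpa using z.2
  rw [← hzv]
  exact hz2

end Aux


/-- The pointlike functor `P_𝕍` is the largest complex functor whose fixed points
contain `𝕍`: `P_𝕍` is itself (the object part of) a complex functor fixing all
members of `𝕍`, and for any complex functor `C`, one has `C ≤ P_𝕍` iff every
member of `𝕍` is a fixed point of `C` (the Galois connection between complex
functors and the opposite lattice of pseudovarieties). -/
theorem stmt17 (𝕍 : Psv) :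
    (∃ P : CplxFunctor,
      (∀ (S : Type) [Finite S] [Semigroup S], P.obj S = {X : Set S | Pointlike 𝕍 X}) ∧
      (∀ (S : Type) [Finite S] [Semigroup S], 𝕍.mem S →
        P.obj S = {X : Set S | ∃ x : S, X = {x}})) ∧
    (∀ C : CplxFunctor,
      (∀ (S : Type) [Finite S] [Semigroup S], C.obj S ⊆ {X : Set S | Pointlike 𝕍 X}) ↔
      (∀ (S : Type) [Finite S] [Semigroup S], 𝕍.mem S →
        C.obj S = {X : Set S | ∃ x : S, X = {x}})) := by
  constructor
  · refine ⟨Pfun 𝕍, fun S _ _ => rfl, ?_⟩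
    intro S _ _ hS
    ext X
    simp only [Set.mem_setOf_eq]
    exact ⟨fun h => pl_of_mem 𝕍 hS h, fun ⟨x, hx⟩ => hx ▸ pl_singleton 𝕍 x⟩
  · intro C
    constructor
    · intro hle S _ _ hS
      ext X
      simp only [Set.mem_setOf_eq]
      refine ⟨fun hX => pl_of_mem 𝕍 hS (hle S hX), ?_⟩
      rintro ⟨x, rfl⟩
      exact (C.isSCom S).2.2.1 x
    · exact fun hfix => C_le_pl 𝕍 C hfix
end

section
/- For a finite semigroup S and a pseudovariety V, the union map ∪ : P_V(P_V(S)) → Po(S), sending a collection 𝒳 of V-pointlike subsets of S (itself pointlike as a subset of the semigroup P_V(S)) to its union, lands in P_V(S); that is, if 𝒳 ∈ P_V(P_V(S)) then ∪𝒳 ∈ P_V(S). -/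
open Pointwise

/-- The product of two pointlike sets is pointlike. -/
theorem Pointlike.mul {𝕍 : Psv} {S : Type} [Finite S] [Semigroup S] {X Y : Set S}
    (hX : Pointlike 𝕍 X) (hY : Pointlike 𝕍 Y) : Pointlike 𝕍 (X * Y) := by
  refine ⟨hX.1.mul hY.1, ?_⟩
  intro V _ _ hV ρ hρ
  obtain ⟨v, hv⟩ := hX.2 V hV ρ hρ
  obtain ⟨w, hw⟩ := hY.2 V hV ρ hρ
  refine ⟨v * w, ?_⟩
  rintro s ⟨x, hx, y, hy, rfl⟩
  exact hρ.1 _ (hv x hx) _ (hw y hy)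

/-- `P_𝕍(S)`: the finite semigroup of `𝕍`-pointlike subsets of `S`, a
subsemigroup of `Po S` under elementwise multiplication. -/
def PLsg (𝕍 : Psv) (S : Type) [Finite S] [Semigroup S] : Type :=
  {X : Set S // Pointlike 𝕍 X}

noncomputable instance (𝕍 : Psv) (S : Type) [Finite S] [Semigroup S] :
    Semigroup (PLsg 𝕍 S) where
  mul X Y := ⟨X.1 * Y.1, X.2.mul Y.2⟩
  mul_assoc X Y Z := Subtype.ext (mul_assoc X.1 Y.1 Z.1)

instance (𝕍 : Psv) (S : Type) [Finite S] [Semigroup S] : Finite (PLsg 𝕍 S) :=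
  Subtype.finite

/-- If `𝒳` is a `𝕍`-pointlike subset of the semigroup `P_𝕍(S)` of `𝕍`-pointlike
subsets of `S`, then its union `⋃𝒳` is a `𝕍`-pointlike subset of `S`. -/
theorem stmt18 (𝕍 : Psv) (S : Type) [Finite S] [Semigroup S]
    (𝒳 : Set (PLsg 𝕍 S)) (h𝒳 : Pointlike 𝕍 𝒳) :
    Pointlike 𝕍 (⋃ X ∈ 𝒳, X.1) := by
  constructor
  · obtain ⟨X, hX⟩ := h𝒳.1
    obtain ⟨s, hs⟩ := X.2.1
    exact ⟨s, Set.mem_biUnion hX hs⟩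
  · intro V _ _ hV ρ hρ
    set τ : Set (PLsg 𝕍 S × V) := {p | ∀ s ∈ p.1.1, (s, p.2) ∈ ρ} with hτ
    have hτm : IsRelMorph τ := by
      constructor
      · rintro ⟨X, v⟩ hX ⟨Y, w⟩ hY s hs
        obtain ⟨x, hx, y, hy, rfl⟩ := hs
        exact hρ.1 _ (hX x hx) _ (hY y hy)
      · intro X
        obtain ⟨v, hv⟩ := X.2.2 V hV ρ hρ
        exact ⟨v, hv⟩
    obtain ⟨v, hv⟩ := h𝒳.2 V hV τ hτm
    refine ⟨v, ?_⟩
    intro s hs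
    obtain ⟨X, hX, hsX⟩ := Set.mem_iUnion₂.mp hs
    exact hv X hX s hsX
end
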